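/- arXiv:1905.07119 — 5 statements merged into one kernel-verified Lean document; each statement's English description precedes it below -/
import Mathlib

section
/- Define the hyperfactorial H(n) = ∏_{k=0}^{n-1} k! for a positive integer n. Then for all positive integers a, b, c, the identity H(a+b) · H(b+c) · H(c+a) divides H(a) · H(b) · H(c) · H(a+b+c) in the sense that the quotient H(a)H(b)H(c)H(a+b+c) / (H(a+b)H(b+c)H(c+a)) is a positive integer. -/
/-- The hyperfactorial `H(n) = ∏_{k=0}^{n-1} k!`. -/
def hyperfac (n : ℕ) : ℕ := ∏ k ∈ Finset.range n, Nat.factorial k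

/-!
By Legendre's formula, `v_p(H(n)) = ∑_{i ≥ 1} F_{p^i}(n)` with `F_m(n) = ∑_{k<n} ⌊k/m⌋`, so it
suffices to show `F(a+b) + F(b+c) + F(c+a) ≤ F(a) + F(b) + F(c) + F(a+b+c)` for `F = F_m`.
Since `F(n + m) = F(n) + n`, replacing `a` by `a + m` adds `2a + b + c` to both sides; this
reduces the inequality to `a, b, c < m`, where `F(n) = (n - m)⁺ + (n - 2m)⁺` on all the
arguments and it becomes a piecewise linear inequality.
-/

open Finset

def HlawkaIneq (f : ℕ → ℕ) (a b c : ℕ) : Prop :=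
  f (a + b) + f (b + c) + f (c + a) ≤ f a + f b + f c + f (a + b + c)

section HlawkaIneq

variable {f : ℕ → ℕ} {m a b c : ℕ}

lemma HlawkaIneq.rotate (h : HlawkaIneq f a b c) : HlawkaIneq f b c a := by
  unfold HlawkaIneq at *
  rw [show b + c + a = a + b + c by ac_rfl]
  omega

lemma HlawkaIneq.add_left (hf : ∀ n, f (n + m) = f n + n) (h : HlawkaIneq f a b c) :
    HlawkaIneq f (a + m) b c := by
  unfold HlawkaIneq at *
  rw [show a + m + b + c = a + b + c + m by omega, show a + m + b = a + b + m by omega,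
    show c + (a + m) = c + a + m by omega, hf, hf, hf, hf]
  omega

lemma eq_tsub_add_tsub_of_le_three_mul (h0 : ∀ n ≤ m, f n = 0) (hf : ∀ n, f (n + m) = f n + n)
    {n : ℕ} (hn : n ≤ 3 * m) : f n = (n - m) + (n - 2 * m) := by
  rcases le_or_gt n m with hn₁ | hn₁
  · rw [h0 n hn₁]; omega
  obtain ⟨n, rfl⟩ : ∃ n', n = n' + m := ⟨n - m, by omega⟩
  rw [hf]
  rcases le_or_gt n m with hn₂ | hn₂
  · rw [h0 n hn₂]; omega
  obtain ⟨n, rfl⟩ : ∃ n', n = n' + m := ⟨n - m, by omega⟩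
  rw [hf, h0 n (by omega)]
  omega

lemma hlawkaIneq_of_lt (h0 : ∀ n ≤ m, f n = 0) (hf : ∀ n, f (n + m) = f n + n)
    (ha : a < m) (hb : b < m) (hc : c < m) : HlawkaIneq f a b c := by
  unfold HlawkaIneq
  have hF {n : ℕ} (hn : n ≤ 3 * m) := eq_tsub_add_tsub_of_le_three_mul h0 hf hn
  rw [h0 a ha.le, h0 b hb.le, h0 c hc.le, hF (n := a + b) (by omega), hF (n := b + c) (by omega),
    hF (n := c + a) (by omega), hF (n := a + b + c) (by omega)]
  omega

theorem hlawkaIneq_of_add_self (hm : 0 < m) (h0 : ∀ n ≤ m, f n = 0)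
    (hf : ∀ n, f (n + m) = f n + n) (a b c : ℕ) : HlawkaIneq f a b c := by
  induction hs : a + b + c using Nat.strong_induction_on generalizing a b c with
  | _ s ih =>
  by_cases ha : m ≤ a
  · obtain ⟨a, rfl⟩ : ∃ a', a = a' + m := ⟨a - m, by omega⟩
    exact (ih _ (by omega) a b c rfl).add_left hf
  by_cases hb : m ≤ b
  · obtain ⟨b, rfl⟩ : ∃ b', b = b' + m := ⟨b - m, by omega⟩
    exact ((ih _ (by omega) b c a rfl).add_left hf).rotate.rotate
  by_cases hc : m ≤ c
  · obtain ⟨c, rfl⟩ : ∃ c', c = c' + m := ⟨c - m, by omega⟩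
    exact ((ih _ (by omega) c a b rfl).add_left hf).rotate
  exact hlawkaIneq_of_lt h0 hf (by omega) (by omega) (by omega)

end HlawkaIneq

def floorSum (m n : ℕ) : ℕ := ∑ k ∈ range n, k / m

lemma floorSum_of_le {m n : ℕ} (h : n ≤ m) : floorSum m n = 0 :=
  sum_eq_zero fun _ hk => Nat.div_eq_of_lt ((mem_range.mp hk).trans_le h)

lemma floorSum_add_self {m : ℕ} (hm : 0 < m) (n : ℕ) : floorSum m (n + m) = floorSum m n + n := by
  unfold floorSum
  rw [add_comm, sum_range_add, ← floorSum, floorSum_of_le le_rfl, zero_add]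
  simp only [Nat.add_div_left _ hm, sum_add_distrib, sum_const, card_range, smul_eq_mul, mul_one]

lemma hlawkaIneq_floorSum {m : ℕ} (hm : 0 < m) (a b c : ℕ) : HlawkaIneq (floorSum m) a b c :=
  hlawkaIneq_of_add_self hm (fun _ => floorSum_of_le) (floorSum_add_self hm) a b c

lemma hyperfac_ne_zero (n : ℕ) : hyperfac n ≠ 0 :=
  (prod_pos fun k _ => k.factorial_pos).ne'

lemma factorization_hyperfac {p n B : ℕ} (hp : p.Prime) (hn : n < B) :
    (hyperfac n).factorization p = ∑ i ∈ Ico 1 B, floorSum (p ^ i) n := by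
  rw [hyperfac, Nat.factorization_prod fun k _ => k.factorial_ne_zero, Finsupp.finsetSum_apply,
    sum_congr rfl fun k hk => Nat.factorization_factorial hp
      ((Nat.log_le_self p k).trans_lt ((mem_range.mp hk).trans hn)), sum_comm]
  rfl

lemma hyperfac_pairwise_sums_dvd (a b c : ℕ) :
    hyperfac (a + b) * hyperfac (b + c) * hyperfac (c + a) ∣
      hyperfac a * hyperfac b * hyperfac c * hyperfac (a + b + c) := by
  rw [← Nat.factorization_prime_le_iff_dvd (by simp [hyperfac_ne_zero])
    (by simp [hyperfac_ne_zero])]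
  intro p hp
  have h (n : ℕ) (hn : n ≤ a + b + c) := factorization_hyperfac hp (Nat.lt_succ_of_le hn)
  simp only [Nat.factorization_mul, ne_eq, mul_eq_zero, hyperfac_ne_zero, or_self,
    not_false_eq_true, Finsupp.add_apply]
  rw [h a (by omega), h b (by omega), h c (by omega), h (a + b + c) le_rfl,
    h (a + b) (by omega), h (b + c) (by omega), h (c + a) (by omega)]
  simp only [← sum_add_distrib]
  exact sum_le_sum fun i _ => hlawkaIneq_floorSum (pow_pos hp.pos i) a b c

theorem hyperfac_quotient_pos_int_general (a b c : ℕ) :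
    ∃ q : ℕ, 0 < q ∧
      hyperfac a * hyperfac b * hyperfac c * hyperfac (a + b + c) =
        q * (hyperfac (a + b) * hyperfac (b + c) * hyperfac (c + a)) := by
  obtain ⟨q, hq⟩ := hyperfac_pairwise_sums_dvd a b c
  refine ⟨q, Nat.pos_of_ne_zero fun hq0 => ?_, by rw [hq, mul_comm]⟩
  simp [hq0, hyperfac_ne_zero] at hq

/-- For positive integers `a, b, c`, the quotient
`H(a)H(b)H(c)H(a+b+c) / (H(a+b)H(b+c)H(c+a))` is a positive integer. -/
theorem hyperfac_quotient_pos_int (a b c : ℕ) (ha : 0 < a) (hb : 0 < b) (hc : 0 < c) :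
    ∃ q : ℕ, 0 < q ∧
      hyperfac a * hyperfac b * hyperfac c * hyperfac (a + b + c) =
        q * (hyperfac (a + b) * hyperfac (b + c) * hyperfac (c + a)) :=
  hyperfac_quotient_pos_int_general a b c
end

section
/- For nonnegative integers a, b, c, MacMahon's plane partition formula satisfies PP(a,b,c) = ∏_{i=1}^{a} ∏_{j=1}^{b} ∏_{k=1}^{c} (i+j+k-1)/(i+j+k-2), where PP(a,b,c) = H(a)H(b)H(c)H(a+b+c)/(H(a+b)H(b+c)H(c+a)) and H is the hyperfactorial. -/
/-!
Induct on `c`. Since `H(n + 1) = H(n) n!`, raising `c` by one multiplies `PP(a,b,c)` by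
`(a+b+c)! c! / ((a+c)! (b+c)!)`. The new layer `k = c` of the triple product telescopes, first
in `j` to `(i+b+c+1)/(i+c+1)` and then in `i`, to the same ratio of factorials.
-/

/-- The hyperfactorial `H(n) = ∏_{k=0}^{n-1} k!`, as a rational number. -/
def hyperfacQ (n : ℕ) : ℚ := ∏ k ∈ Finset.range n, (Nat.factorial k : ℚ)

/-- MacMahon's box formula `PP(a,b,c)`. -/
def PP (a b c : ℕ) : ℚ :=
  hyperfacQ a * hyperfacQ b * hyperfacQ c * hyperfacQ (a + b + c) /
    (hyperfacQ (a + b) * hyperfacQ (b + c) * hyperfacQ (c + a))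

open Finset
open scoped Nat

theorem Finset.prod_range_div_of_ne_zero {G : Type*} [CommGroupWithZero G] (f : ℕ → G)
    (hf : ∀ i, f i ≠ 0) (n : ℕ) : ∏ i ∈ range n, f (i + 1) / f i = f n / f 0 := by
  induction n with
  | zero => simp [hf 0]
  | succ n ih => rw [prod_range_succ, ih, div_mul_div_cancel₀' (hf n)]

section Telescoping

variable {K : Type*} [Field K] [LinearOrder K] [IsStrictOrderedRing K]

theorem prod_range_add_two_div_add_one {x : K} (hx : 0 ≤ x) (n : ℕ) :
    ∏ j ∈ range n, (x + j + 2) / (x + j + 1) = (x + n + 1) / (x + 1) := by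
  have h := prod_range_div_of_ne_zero (fun j : ℕ => x + j + 1) (fun j => by positivity) n
  simp only [Nat.cast_add_one, Nat.cast_zero, add_zero] at h
  rw [← h]
  exact prod_congr rfl fun j _ => by ring_nf

theorem prod_range_add_one_div_add_one (m n a : ℕ) :
    ∏ i ∈ range a, ((i : K) + m + 1) / ((i : K) + n + 1) =
      (a + m)! * n ! / ((a + n)! * m !) := by
  have h := prod_range_div_of_ne_zero (fun i => ((i + m)! / (i + n)! : K))
    (fun i => by positivity) a
  rw [zero_add, zero_add, div_div_div_eq] at h
  rw [← h]
  refine prod_congr rfl fun i _ => ?_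
  rw [add_right_comm i 1, add_right_comm i 1, Nat.factorial_succ, Nat.factorial_succ]
  push_cast
  field_simp

theorem prod_range_prod_range_add_two_div_add_one (a b c : ℕ) :
    ∏ i ∈ range a, ∏ j ∈ range b, ((i : K) + j + c + 2) / ((i : K) + j + c + 1) =
      (a + b + c)! * c ! / ((a + c)! * (b + c)!) := by
  rw [add_assoc a b c, ← prod_range_add_one_div_add_one]
  refine prod_congr rfl fun i _ => ?_
  have h := prod_range_add_two_div_add_one (x := (i + c : K)) (by positivity) b
  convert h using 2 <;> push_cast <;> ring

end Telescoping

theorem hyperfacQ_pos (n : ℕ) : 0 < hyperfacQ n :=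
  prod_pos fun k _ => by positivity

theorem hyperfacQ_succ (n : ℕ) : hyperfacQ (n + 1) = hyperfacQ n * n ! :=
  prod_range_succ _ n

theorem PP_zero_right (a b : ℕ) : PP a b 0 = 1 := by
  have := hyperfacQ_pos a
  have := hyperfacQ_pos b
  have := hyperfacQ_pos (a + b)
  simp only [PP, add_zero, zero_add, hyperfacQ, range_zero, prod_empty]
  field_simp

theorem PP_succ_right (a b c : ℕ) :
    PP a b (c + 1) = PP a b c * ((a + b + c)! * c ! / ((a + c)! * (b + c)!)) := by
  have := hyperfacQ_pos (a + b)
  have := hyperfacQ_pos (b + c)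
  have := hyperfacQ_pos (a + c)
  simp only [PP, ← add_assoc, add_right_comm c 1 a, hyperfacQ_succ, add_comm c a]
  field_simp

/-- MacMahon's triple product formula:
`PP(a,b,c) = ∏_{i=1}^{a} ∏_{j=1}^{b} ∏_{k=1}^{c} (i+j+k-1)/(i+j+k-2)`
(indices shifted so that `i, j, k` range over `0, …, a-1` etc.). -/
theorem PP_eq_triple_product (a b c : ℕ) :
    PP a b c =
      ∏ i ∈ Finset.range a, ∏ j ∈ Finset.range b, ∏ k ∈ Finset.range c,
        ((i : ℚ) + j + k + 2) / ((i : ℚ) + j + k + 1) := by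
  induction c with
  | zero => simp [PP_zero_right]
  | succ c ih =>
    simp only [prod_range_succ, prod_mul_distrib, ← ih, prod_range_prod_range_add_two_div_add_one,
      PP_succ_right]
end

section
/- Region-splitting for perfect matchings: Let G be a finite bipartite graph with parts V₁, V₂ and |V₁| = |V₂|, and let Q be an induced subgraph of G on vertex set W such that |W ∩ V₁| = |W ∩ V₂| and every edge of G joining a vertex of W to a vertex outside W has its W-endpoint in V₁ (one fixed side). Then the number of perfect matchings of G equals the number of perfect matchings of Q times the number of perfect matchings of G − W. -/
/-- The number of perfect matchings of a simple graph. -/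
noncomputable def pmCount {V : Type*} (G : SimpleGraph V) : ℕ :=
  Nat.card {M : G.Subgraph // M.IsPerfectMatching}

/-!
A perfect matching of `G` matches `W ∩ V₂` into `W ∩ V₁`, since a vertex of `V₂` in `W` has all
its neighbours in `W ∩ V₁`. The two sets have the same size, so this is a bijection, and the
vertices of `W ∩ V₁` are matched inside `W` as well. Hence no matching edge leaves `W`, and a
perfect matching of `G` is the same as a pair of perfect matchings of `G[W]` and `G[Wᶜ]`.
-/

open SimpleGraph Set

namespace SimpleGraph.Subgraph

variable {V : Type*} {G : SimpleGraph V}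

def IsAdjClosed (M : G.Subgraph) (s : Set V) : Prop :=
  ∀ ⦃a b⦄, M.Adj a b → a ∈ s → b ∈ s

lemma IsAdjClosed.compl {M : G.Subgraph} {s : Set V} (h : M.IsAdjClosed s) :
    M.IsAdjClosed sᶜ :=
  fun _ _ hab ha hb => ha (h hab.symm hb)

lemma IsPerfectMatching.adj_mem_of_ncard_le {M : G.Subgraph} (hM : M.IsPerfectMatching)
    {A B : Set V} (hB : B.Finite) (hcard : B.ncard ≤ A.ncard)
    (hAB : ∀ ⦃a b⦄, M.Adj a b → a ∈ A → b ∈ B) ⦃b a : V⦄ (hba : M.Adj b a) (hb : b ∈ B) :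
    a ∈ A := by
  choose f hf _ using isPerfectMatching_iff.mp hM
  have hinj : InjOn f A := fun x _ y _ hxy =>
    hM.1.eq_of_adj_left (hf x).symm (hxy ▸ (hf y).symm)
  have himage : f '' A = B :=
    eq_of_subset_of_ncard_le (image_subset_iff.2 fun a ha => hAB (hf a) ha)
      (by rwa [hinj.ncard_image]) hB
  obtain ⟨a', ha', rfl⟩ := himage ▸ hb
  rwa [hM.1.eq_of_adj_left hba (hf a').symm]

lemma IsPerfectMatching.isAdjClosed_of_bipartite [Finite V] {M : G.Subgraph}
    (hM : M.IsPerfectMatching) {V₁ V₂ W : Set V} (hpart : ∀ x, x ∈ V₁ ↔ x ∉ V₂)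
    (hbip : ∀ a b, G.Adj a b → (a ∈ V₁ ∧ b ∈ V₂) ∨ (a ∈ V₂ ∧ b ∈ V₁))
    (hWbal : (W ∩ V₁).ncard = (W ∩ V₂).ncard)
    (hbdry : ∀ a b, G.Adj a b → a ∈ W → b ∉ W → a ∈ V₁) :
    M.IsAdjClosed W := by
  have hV₂ : ∀ ⦃a b⦄, M.Adj a b → a ∈ W ∩ V₂ → b ∈ W ∩ V₁ := by
    rintro a b hab ⟨haW, haV₂⟩
    have hG := M.adj_sub hab
    have haV₁ : a ∉ V₁ := fun h => (hpart a).mp h haV₂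
    refine ⟨by_contra fun hbW => haV₁ (hbdry a b hG haW hbW), ?_⟩
    rcases hbip a b hG with h | h
    exacts [absurd h.1 haV₁, h.2]
  intro a b hab haW
  by_cases haV₂ : a ∈ V₂
  · exact (hV₂ hab ⟨haW, haV₂⟩).1
  · exact (hM.adj_mem_of_ncard_le (toFinite _) hWbal.le hV₂ hab
      ⟨haW, (hpart a).mpr haV₂⟩).1

variable (s : Set V)

def restrictInduce (M : G.Subgraph) : (G.induce s).Subgraph where
  verts := univ
  Adj a b := M.Adj a b
  adj_sub h := M.adj_sub h
  edge_vert _ := mem_univ _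
  symm := ⟨fun _ _ h => h.symm⟩

def glueInduce (M₁ : (G.induce s).Subgraph) (M₂ : (G.induce sᶜ).Subgraph) : G.Subgraph where
  verts := univ
  Adj a b := (∃ (ha : a ∈ s) (hb : b ∈ s), M₁.Adj ⟨a, ha⟩ ⟨b, hb⟩) ∨
    (∃ (ha : a ∉ s) (hb : b ∉ s), M₂.Adj ⟨a, ha⟩ ⟨b, hb⟩)
  adj_sub := by
    rintro a b (⟨_, _, h⟩ | ⟨_, _, h⟩)
    exacts [M₁.adj_sub h, M₂.adj_sub h]
  edge_vert _ := mem_univ _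
  symm := by
    refine ⟨?_⟩
    rintro a b (⟨ha, hb, h⟩ | ⟨ha, hb, h⟩)
    exacts [Or.inl ⟨hb, ha, h.symm⟩, Or.inr ⟨hb, ha, h.symm⟩]

variable {s}

lemma IsPerfectMatching.restrictInduce {M : G.Subgraph} (hM : M.IsPerfectMatching)
    (hs : M.IsAdjClosed s) : (M.restrictInduce s).IsPerfectMatching := by
  refine isPerfectMatching_iff.mpr fun v => ?_
  obtain ⟨w, hw, hu⟩ := isPerfectMatching_iff.mp hM v
  exact ⟨⟨w, hs hw v.2⟩, hw, fun y hy => Subtype.ext (hu y hy)⟩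

lemma IsPerfectMatching.glueInduce {M₁ : (G.induce s).Subgraph} {M₂ : (G.induce sᶜ).Subgraph}
    (h₁ : M₁.IsPerfectMatching) (h₂ : M₂.IsPerfectMatching) :
    (glueInduce s M₁ M₂).IsPerfectMatching := by
  refine isPerfectMatching_iff.mpr fun v => ?_
  by_cases hv : v ∈ s
  · obtain ⟨w, hw, hu⟩ := isPerfectMatching_iff.mp h₁ ⟨v, hv⟩
    refine ⟨w, Or.inl ⟨hv, w.2, hw⟩, ?_⟩
    rintro y (⟨_, hy, h⟩ | ⟨hv', _, _⟩)
    exacts [congrArg Subtype.val (hu ⟨y, hy⟩ h), absurd hv hv']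
  · obtain ⟨w, hw, hu⟩ := isPerfectMatching_iff.mp h₂ ⟨v, hv⟩
    refine ⟨w, Or.inr ⟨hv, w.2, hw⟩, ?_⟩
    rintro y (⟨hv', _, _⟩ | ⟨_, hy, h⟩)
    exacts [absurd hv' hv, congrArg Subtype.val (hu ⟨y, hy⟩ h)]

end SimpleGraph.Subgraph

open SimpleGraph.Subgraph

lemma pmCount_eq_mul_of_forall_isAdjClosed {V : Type*} {G : SimpleGraph V} {s : Set V}
    (hs : ∀ M : G.Subgraph, M.IsPerfectMatching → M.IsAdjClosed s) :
    pmCount G = pmCount (G.induce s) * pmCount (G.induce sᶜ) := by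
  rw [pmCount, pmCount, pmCount, ← Nat.card_prod]
  refine Nat.card_congr
    { toFun := fun M => (⟨_, M.2.restrictInduce (hs M.1 M.2)⟩,
        ⟨_, M.2.restrictInduce (hs M.1 M.2).compl⟩)
      invFun := fun p => ⟨_, p.1.2.glueInduce p.2.2⟩
      left_inv := ?_
      right_inv := ?_ }
  · rintro ⟨M, hM⟩
    refine Subtype.ext (Subgraph.ext (isSpanning_iff.mp hM.2).symm ?_)
    ext a b
    refine ⟨by rintro (⟨_, _, h⟩ | ⟨_, _, h⟩) <;> exact h, fun h => ?_⟩
    by_cases ha : a ∈ s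
    exacts [Or.inl ⟨ha, hs M hM h ha, h⟩, Or.inr ⟨ha, (hs M hM).compl h ha, h⟩]
  · rintro ⟨⟨M₁, h₁⟩, ⟨M₂, h₂⟩⟩
    refine Prod.ext (Subtype.ext (Subgraph.ext (isSpanning_iff.mp h₁.2).symm ?_))
      (Subtype.ext (Subgraph.ext (isSpanning_iff.mp h₂.2).symm ?_))
    · ext a b
      refine ⟨?_, fun h => Or.inl ⟨a.2, b.2, h⟩⟩
      rintro (⟨_, _, h⟩ | ⟨ha, _, _⟩)
      exacts [h, absurd a.2 ha]
    · ext a b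
      refine ⟨?_, fun h => Or.inr ⟨a.2, b.2, h⟩⟩
      rintro (⟨ha, _, _⟩ | ⟨_, _, h⟩)
      exacts [absurd ha a.2, h]

theorem region_splitting_general {V : Type*} [Fintype V]
    (G : SimpleGraph V) (V₁ V₂ : Set V)
    (hpart : ∀ x, x ∈ V₁ ↔ x ∉ V₂)
    (hbip : ∀ a b, G.Adj a b → (a ∈ V₁ ∧ b ∈ V₂) ∨ (a ∈ V₂ ∧ b ∈ V₁))
    (W : Set V)
    (hWbal : (W ∩ V₁).ncard = (W ∩ V₂).ncard)
    (hbdry : ∀ a b, G.Adj a b → a ∈ W → b ∉ W → a ∈ V₁) :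
    pmCount G = pmCount (G.induce W) * pmCount (G.induce (Wᶜ : Set V)) :=
  pmCount_eq_mul_of_forall_isAdjClosed fun _ hM =>
    hM.isAdjClosed_of_bipartite hpart hbip hWbal hbdry

/-- Region-splitting for perfect matchings: if `Q = G[W]` is balanced and every edge of `G`
from `W` to its complement has its `W`-endpoint in `V₁`, then the perfect matchings of `G`
factor as pairs of perfect matchings of `G[W]` and `G[Wᶜ]`. -/
theorem region_splitting {V : Type*} [Fintype V] [DecidableEq V]
    (G : SimpleGraph V) (V₁ V₂ : Set V)
    (hpart : ∀ x, x ∈ V₁ ↔ x ∉ V₂)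
    (hbip : ∀ a b, G.Adj a b → (a ∈ V₁ ∧ b ∈ V₂) ∨ (a ∈ V₂ ∧ b ∈ V₁))
    (hcard : V₁.ncard = V₂.ncard)
    (W : Set V)
    (hWbal : (W ∩ V₁).ncard = (W ∩ V₂).ncard)
    (hbdry : ∀ a b, G.Adj a b → a ∈ W → b ∉ W → a ∈ V₁) :
    pmCount G = pmCount (G.induce W) * pmCount (G.induce (Wᶜ : Set V)) :=
  region_splitting_general G V₁ V₂ hpart hbip W hWbal hbdry
end

section
/- Dodgson-condensation consequence for 2×2 blocks: Let M be an n×n matrix over a commutative ring with n ≥ 2, and for indices i,j let M(i|j) denote the matrix with row i and column j removed and M(i,i'|j,j') with rows i,i' and columns j,j' removed. Then det(M) · det(M(1,n|1,n)) = det(M(1|1)) · det(M(n|n)) − det(M(1|n)) · det(M(n|1)). -/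
/-!
Jacobi's complementary minor theorem: for `M` indexed by `κ ⊕ ι`, the `κ × κ` block of
`adjugate M` has determinant `det M ^ (|κ| - 1) * det M_ιι`. Over a generic matrix it follows by
cancelling `det M` from `det (M * X) = det M * det X`, where `X` agrees with `adjugate M` on the
columns indexed by `κ` and with `1` on those indexed by `ι`, so that `M * X` is block triangular
with diagonal blocks `det M • 1` and `M_ιι`. Taking `κ = {first, last}` gives the theorem, the
`2 × 2` block of the adjugate being made of the four corner cofactors.
-/

open Matrix

namespace Matrix

variable {R : Type*} [CommRing R] {κ ι : Type*} [Fintype κ] [Fintype ι] [DecidableEq κ]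
  [DecidableEq ι]

theorem det_mul_det_toBlocks₁₁_adjugate (M : Matrix (κ ⊕ ι) (κ ⊕ ι) R) :
    M.det * (adjugate M).toBlocks₁₁.det = M.det ^ Fintype.card κ * M.toBlocks₂₂.det := by
  obtain ⟨A, B, C, D, rfl⟩ : ∃ A B C D, M = fromBlocks A B C D :=
    ⟨_, _, _, _, (fromBlocks_toBlocks M).symm⟩
  obtain ⟨P, Q, S, T, hadj⟩ : ∃ P Q S T, adjugate (fromBlocks A B C D) = fromBlocks P Q S T :=
    ⟨_, _, _, _, (fromBlocks_toBlocks _).symm⟩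
  have hcols : A * P + B * S = (fromBlocks A B C D).det • 1 ∧ C * P + D * S = 0 := by
    have h := mul_adjugate (fromBlocks A B C D)
    rw [hadj, fromBlocks_multiply, ← fromBlocks_one, fromBlocks_smul, fromBlocks_inj] at h
    simp_all
  have h := det_mul (fromBlocks A B C D) (fromBlocks P 0 S 1)
  rw [fromBlocks_multiply, hcols.1, hcols.2, det_fromBlocks_zero₂₁, det_fromBlocks_zero₁₂] at h
  simpa [hadj, det_smul] using h.symm

theorem det_toBlocks₁₁_adjugate [Nonempty κ] (M : Matrix (κ ⊕ ι) (κ ⊕ ι) R) :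
    (adjugate M).toBlocks₁₁.det = M.det ^ (Fintype.card κ - 1) * M.toBlocks₂₂.det := by
  let A := mvPolynomialX (κ ⊕ ι) (κ ⊕ ι) ℤ
  have hA : (adjugate A).toBlocks₁₁.det = A.det ^ (Fintype.card κ - 1) * A.toBlocks₂₂.det := by
    apply mul_left_cancel₀ (det_mvPolynomialX_ne_zero (κ ⊕ ι) ℤ)
    rw [det_mul_det_toBlocks₁₁_adjugate, ← mul_assoc, ← pow_succ',
      Nat.sub_add_cancel Fintype.card_pos]
  have h := congrArg (MvPolynomial.aeval fun p : (κ ⊕ ι) × (κ ⊕ ι) => M p.1 p.2) hA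
  rw [map_mul, map_pow, AlgHom.map_det, AlgHom.map_det, AlgHom.map_det] at h
  rwa [← mvPolynomialX_mapMatrix_aeval ℤ M, ← AlgHom.map_adjugate]

theorem adjugate_corners_det {n : ℕ} (M : Matrix (Fin (n + 2)) (Fin (n + 2)) R) :
    adjugate M 0 0 * adjugate M (Fin.last _) (Fin.last _) -
        adjugate M 0 (Fin.last _) * adjugate M (Fin.last _) 0 =
      (M.submatrix Fin.succ Fin.succ).det * (M.submatrix Fin.castSucc Fin.castSucc).det -
        (M.submatrix Fin.succ Fin.castSucc).det * (M.submatrix Fin.castSucc Fin.succ).det := by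
  have hsign : ((-1 : R) ^ (n + 1)) * (-1) ^ (n + 1) = 1 := by
    rw [← pow_add, (Even.add_self (n + 1)).neg_one_pow]
  simp only [adjugate_fin_succ_eq_det_submatrix, Fin.succAbove_zero, Fin.succAbove_last,
    Fin.val_zero, Fin.val_last, add_zero, zero_add, pow_zero, one_mul,
    (Even.add_self (n + 1)).neg_one_pow]
  linear_combination (-(M.submatrix Fin.succ Fin.castSucc).det *
    (M.submatrix Fin.castSucc Fin.succ).det) * hsign

end Matrix

noncomputable def finEndsSumInteriorEquiv (n : ℕ) : Fin 2 ⊕ Fin n ≃ Fin (n + 2) :=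
  Equiv.ofBijective (Sum.elim ![0, Fin.last (n + 1)] fun j => j.succ.castSucc) <| by
    rw [Fintype.bijective_iff_injective_and_card]
    refine ⟨?_, by simp [add_comm]⟩
    rintro (a | a) (b | b) h <;> (try fin_cases a) <;> (try fin_cases b) <;>
      simp [Fin.ext_iff] at h ⊢ <;> omega

/-- The Jacobi–Desnanot identity (Dodgson condensation):
`det(M) · det(M(1,n|1,n)) = det(M(1|1)) · det(M(n|n)) − det(M(1|n)) · det(M(n|1))`,
for an `(n+2) × (n+2)` matrix over a commutative ring, where the minors are obtained by
deleting the indicated first/last rows and columns. -/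
theorem jacobi_desnanot {R : Type*} [CommRing R] (n : ℕ)
    (M : Matrix (Fin (n + 2)) (Fin (n + 2)) R) :
    M.det *
      (M.submatrix (fun i : Fin n => (i.succ.castSucc : Fin (n + 2)))
        (fun j : Fin n => (j.succ.castSucc : Fin (n + 2)))).det =
    (M.submatrix Fin.succ Fin.succ).det * (M.submatrix Fin.castSucc Fin.castSucc).det -
    (M.submatrix Fin.succ Fin.castSucc).det * (M.submatrix Fin.castSucc Fin.succ).det := by
  set e := finEndsSumInteriorEquiv n
  have h := det_toBlocks₁₁_adjugate (M.submatrix e e)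
  rw [adjugate_submatrix_equiv_self, det_submatrix_equiv_self, det_fin_two, Fintype.card_fin,
    Nat.add_one_sub_one, pow_one] at h
  rw [← adjugate_corners_det]
  exact h.symm
end

section
/- Hyperfactorial quotient identity: for all nonnegative integers m and n, H(m+n) / (H(m) · H(n)) = ∏_{k=0}^{n-1} (m+k)! / k!, where H is the hyperfactorial H(t) = ∏_{k=0}^{t-1} k!. In particular H(m)·H(n) divides H(m+n) in the integers. -/
open Finset Nat

lemma hyperfac_add (m n : ℕ) :
    hyperfac (m + n) = hyperfac m * ∏ k ∈ range n, (m + k)! := by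
  simp only [hyperfac, prod_range_add]

lemma hyperfacQ_add (m n : ℕ) :
    hyperfacQ (m + n) = hyperfacQ m * ∏ k ∈ range n, ((m + k)! : ℚ) := by
  simp only [hyperfacQ, prod_range_add]

lemma hyperfacQ_ne_zero (n : ℕ) : hyperfacQ n ≠ 0 :=
  prod_ne_zero_iff.mpr fun k _ => mod_cast k.factorial_ne_zero

/-- Each factor `(m + k)! / k!` is an integer, so `H(n)` divides the tail product. -/
lemma hyperfac_mul_dvd_hyperfac_add (m n : ℕ) : hyperfac m * hyperfac n ∣ hyperfac (m + n) := by
  rw [hyperfac_add]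
  exact mul_dvd_mul_left _ <|
    prod_dvd_prod_of_dvd _ _ fun k _ => factorial_dvd_factorial (le_add_left k m)

/-- Hyperfactorial quotient identity: `H(m+n)/(H(m)·H(n)) = ∏_{k=0}^{n-1} (m+k)!/k!`,
and in particular `H(m)·H(n)` divides `H(m+n)` in the integers. -/
theorem hyperfac_quotient_identity (m n : ℕ) :
    hyperfacQ (m + n) / (hyperfacQ m * hyperfacQ n) =
      ∏ k ∈ Finset.range n, ((Nat.factorial (m + k) : ℚ) / (Nat.factorial k : ℚ)) ∧
    (hyperfac m * hyperfac n) ∣ hyperfac (m + n) := by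
  refine ⟨?_, hyperfac_mul_dvd_hyperfac_add m n⟩
  rw [hyperfacQ_add, prod_div_distrib, mul_div_mul_left _ _ (hyperfacQ_ne_zero m)]
  rfl
end
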